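/- arXiv:1801.06008 — 2 statements merged into one kernel-verified Lean document; each statement's English description precedes it below -/
import Mathlib

section
/- For every n ≥ 1, the distance from p*(μ_n) to the set J is at least (3/4 − 1/√2)·μ_n/2, where μ_n = 2^{−2n−1}/(3/4 − 1/√2). -/
open Real

noncomputable def pstar (lam : ℝ) : ℝ := 2 - Real.sqrt 2 + (3/4 - 1/Real.sqrt 2) * lam

def Jset : Set ℝ :=
  {x | ∃ n : ℕ, 1 ≤ n ∧ x = 2 - Real.sqrt 2 + ((2:ℝ) ^ (2*n))⁻¹} ∪ {2 - Real.sqrt 2}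

noncomputable def muSeq (n : ℕ) : ℝ := ((2:ℝ) ^ (2*n+1))⁻¹ / (3/4 - 1/Real.sqrt 2)

lemma key_abs (n m : ℕ) :
    ((2:ℝ) ^ (2*n))⁻¹ / 4 ≤ |((2:ℝ) ^ (2*n))⁻¹ / 2 - ((2:ℝ) ^ (2*m))⁻¹| := by
  have ha : (0:ℝ) < ((2:ℝ) ^ (2*n))⁻¹ := by positivity
  rcases le_or_gt m n with h | h
  · have h1 : ((2:ℝ) ^ (2*n))⁻¹ ≤ ((2:ℝ) ^ (2*m))⁻¹ := by
      apply inv_anti₀ (by positivity)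
      exact pow_le_pow_right₀ (by norm_num) (by omega)
    rw [abs_sub_comm, abs_of_nonneg (by linarith)]
    linarith
  · have h1 : ((2:ℝ) ^ (2*m))⁻¹ ≤ ((2:ℝ) ^ (2*n+2))⁻¹ := by
      apply inv_anti₀ (by positivity)
      exact pow_le_pow_right₀ (by norm_num) (by omega)
    have h2 : ((2:ℝ) ^ (2*n+2))⁻¹ = ((2:ℝ) ^ (2*n))⁻¹ / 4 := by
      rw [pow_succ, pow_succ, mul_inv, mul_inv]; ring
    rw [abs_of_nonneg (by linarith)]
    linarith

theorem stmt1 :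
    ∀ n : ℕ, 1 ≤ n →
      (3/4 - 1/Real.sqrt 2) * muSeq n / 2 ≤ Metric.infDist (pstar (muSeq n)) Jset := by
  intro n _
  have hs : (0:ℝ) < Real.sqrt 2 := Real.sqrt_pos.mpr (by norm_num)
  have hsq : Real.sqrt 2 * Real.sqrt 2 = 2 := Real.mul_self_sqrt (by norm_num)
  have h43 : (4/3:ℝ) < Real.sqrt 2 := by nlinarith
  have hinv : 1 / Real.sqrt 2 * Real.sqrt 2 = 1 := by field_simp
  have hc : 0 < 3/4 - 1/Real.sqrt 2 := by nlinarith
  have hmul : (3/4 - 1/Real.sqrt 2) * muSeq n = ((2:ℝ) ^ (2*n+1))⁻¹ := by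
    unfold muSeq
    rw [mul_comm, div_mul_cancel₀ _ hc.ne']
  have e1 : ((2:ℝ) ^ (2*n+1))⁻¹ = ((2:ℝ) ^ (2*n))⁻¹ / 2 := by
    rw [pow_succ, mul_inv]; ring
  have hx : pstar (muSeq n) = 2 - Real.sqrt 2 + ((2:ℝ) ^ (2*n))⁻¹ / 2 := by
    unfold pstar
    rw [hmul, e1]
  have ha : (0:ℝ) < ((2:ℝ) ^ (2*n))⁻¹ := by positivity
  haveI : Nonempty ↥Jset := ⟨⟨2 - Real.sqrt 2, Or.inr rfl⟩⟩
  rw [Metric.infDist_eq_iInf]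
  have hbound : (3/4 - 1/Real.sqrt 2) * muSeq n / 2 = ((2:ℝ) ^ (2*n))⁻¹ / 4 := by
    rw [hmul, e1]; ring
  rw [hbound]
  apply le_ciInf
  rintro ⟨y, hy | hy⟩
  · obtain ⟨m, _, rfl⟩ := hy
    simp only [Real.dist_eq, hx]
    have := key_abs n m
    calc ((2:ℝ) ^ (2*n))⁻¹ / 4 ≤ |((2:ℝ) ^ (2*n))⁻¹ / 2 - ((2:ℝ) ^ (2*m))⁻¹| := this
      _ = |2 - Real.sqrt 2 + ((2:ℝ) ^ (2*n))⁻¹ / 2 - (2 - Real.sqrt 2 + ((2:ℝ) ^ (2*m))⁻¹)| := by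
          ring_nf
  · rcases hy with rfl
    simp only [Real.dist_eq, hx]
    rw [show 2 - Real.sqrt 2 + ((2:ℝ) ^ (2*n))⁻¹ / 2 - (2 - Real.sqrt 2)
        = ((2:ℝ) ^ (2*n))⁻¹ / 2 by ring]
    rw [abs_of_nonneg (by linarith)]
    linarith
end

section
/- As λ → 0⁺, each of the four quantities γ^{0,0}_λ(p*(λ), p*(λ)), γ^{1,1}_λ(p*(λ), p*(λ)), γ^{1,0}_λ(p*(λ), p*(λ)), γ^{0,1}_λ(p*(λ), p*(λ)) converges to 1/√2, where p*(λ) = 2 − √2 + (3/4 − 1/√2)λ. -/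
open Filter

noncomputable def gamma00 (lam a b : ℝ) : ℝ :=
  -2 * (a - b - lam + b * lam) / (lam * (a + b + lam - a * lam - b * lam))

noncomputable def gamma11 (lam a b : ℝ) : ℝ :=
  -(a - b + lam * b) / (lam * (a + b + lam - a * lam - b * lam - 2))

noncomputable def gamma10 (lam a b : ℝ) : ℝ :=
  (2*a + 2*b + 2*lam - a*b - a*lam - 2*b*lam + a*b*lam - 2) /
    (lam * (b - a + lam * a - b * lam + 1))

noncomputable def gamma01 (lam a b : ℝ) : ℝ :=
  -(2*a + 2*b - a*b - 2*b*lam + a*b*lam - 2) /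
    (lam * (a - b - a * lam + b * lam + 1))

theorem stmt11 :
    Tendsto (fun lam : ℝ => gamma00 lam (pstar lam) (pstar lam))
      (nhdsWithin 0 (Set.Ioi 0)) (nhds (1 / Real.sqrt 2)) ∧
    Tendsto (fun lam : ℝ => gamma11 lam (pstar lam) (pstar lam))
      (nhdsWithin 0 (Set.Ioi 0)) (nhds (1 / Real.sqrt 2)) ∧
    Tendsto (fun lam : ℝ => gamma10 lam (pstar lam) (pstar lam))
      (nhdsWithin 0 (Set.Ioi 0)) (nhds (1 / Real.sqrt 2)) ∧
    Tendsto (fun lam : ℝ => gamma01 lam (pstar lam) (pstar lam))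
      (nhdsWithin 0 (Set.Ioi 0)) (nhds (1 / Real.sqrt 2)) := by
  set s := Real.sqrt 2 with hsdef
  have hs : s > 0 := Real.sqrt_pos.mpr (by norm_num)
  have hs2 : s ^ 2 = 2 := Real.sq_sqrt (by norm_num)
  have hs0 : s ≠ 0 := ne_of_gt hs
  have hslt : s < 2 := by nlinarith
  have hinv : (1:ℝ) / s = s / 2 := by
    rw [div_eq_div_iff hs0 two_ne_zero]
    linear_combination - hs2
  have hp : ∀ l : ℝ, pstar l = 2 - s + (3/4 - s/2) * l := by
    intro l
    unfold pstar
    rw [← hsdef, hinv]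
  have h0 : pstar 0 = 2 - s := by simp [pstar, hsdef]
  refine ⟨?_, ?_, ?_, ?_⟩
  · -- gamma00
    have key : ∀ l ∈ Set.Ioi (0:ℝ), gamma00 l (pstar l) (pstar l) =
        (2 - 2 * pstar l) / (2 * pstar l + l - 2 * pstar l * l) := by
      intro l hl
      have hl0 : (l:ℝ) ≠ 0 := ne_of_gt hl
      unfold gamma00
      rw [show -2 * (pstar l - pstar l - l + pstar l * l) = l * (2 - 2 * pstar l) from by ring,
          show l * (pstar l + pstar l + l - pstar l * l - pstar l * l)
            = l * (2 * pstar l + l - 2 * pstar l * l) from by ring,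
          mul_div_mul_left _ _ hl0]
    refine Tendsto.congr' (eventuallyEq_of_mem self_mem_nhdsWithin fun l hl => (key l hl).symm) ?_
    have hca : ContinuousAt (fun l : ℝ => (2 - 2 * pstar l) / (2 * pstar l + l - 2 * pstar l * l)) 0 := by
      apply ContinuousAt.div
      · simp only [hp]; fun_prop
      · simp only [hp]; fun_prop
      · rw [h0]; nlinarith
    have hval : (2 - 2 * pstar 0) / (2 * pstar 0 + 0 - 2 * pstar 0 * 0) = 1 / s := by
      rw [h0]
      rw [div_eq_div_iff (by nlinarith) hs0]
      linear_combination 2 * hs2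
    have := hca.tendsto.mono_left (nhdsWithin_le_nhds (s := Set.Ioi 0))
    rwa [hval] at this
  · -- gamma11
    have key : ∀ l ∈ Set.Ioi (0:ℝ), gamma11 l (pstar l) (pstar l) =
        (- pstar l) / (2 * pstar l + l - 2 * pstar l * l - 2) := by
      intro l hl
      have hl0 : (l:ℝ) ≠ 0 := ne_of_gt hl
      unfold gamma11
      rw [show -(pstar l - pstar l + l * pstar l) = l * (- pstar l) from by ring,
          show l * (pstar l + pstar l + l - pstar l * l - pstar l * l - 2)
            = l * (2 * pstar l + l - 2 * pstar l * l - 2) from by ring,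
          mul_div_mul_left _ _ hl0]
    refine Tendsto.congr' (eventuallyEq_of_mem self_mem_nhdsWithin fun l hl => (key l hl).symm) ?_
    have hca : ContinuousAt (fun l : ℝ => (- pstar l) / (2 * pstar l + l - 2 * pstar l * l - 2)) 0 := by
      apply ContinuousAt.div
      · simp only [hp]; fun_prop
      · simp only [hp]; fun_prop
      · rw [h0]; nlinarith
    have hval : (- pstar 0) / (2 * pstar 0 + 0 - 2 * pstar 0 * 0 - 2) = 1 / s := by
      rw [h0]
      rw [div_eq_div_iff (by nlinarith) hs0]
      linear_combination hs2
    have := hca.tendsto.mono_left (nhdsWithin_le_nhds (s := Set.Ioi 0))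
    rwa [hval] at this
  · -- gamma10
    have key : ∀ l ∈ Set.Ioi (0:ℝ), gamma10 l (pstar l) (pstar l) =
        2 * s * (3/4 - s/2) - (3/4 - s/2)^2 * l + (pstar l - 1) * (pstar l - 2) := by
      intro l hl
      have hl0 : (l:ℝ) ≠ 0 := ne_of_gt hl
      unfold gamma10
      rw [hp l]
      rw [show l * ((2 - s + (3/4 - s/2) * l) - (2 - s + (3/4 - s/2) * l)
            + l * (2 - s + (3/4 - s/2) * l) - (2 - s + (3/4 - s/2) * l) * l + 1) = l from by ring]
      rw [div_eq_iff hl0]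
      linear_combination - hs2
    refine Tendsto.congr' (eventuallyEq_of_mem self_mem_nhdsWithin fun l hl => (key l hl).symm) ?_
    have hca : ContinuousAt (fun l : ℝ =>
        2 * s * (3/4 - s/2) - (3/4 - s/2)^2 * l + (pstar l - 1) * (pstar l - 2)) 0 := by simp only [hp]; fun_prop
    have hval : 2 * s * (3/4 - s/2) - (3/4 - s/2)^2 * 0 + (pstar 0 - 1) * (pstar 0 - 2) = 1 / s := by
      rw [h0, hinv]
      ring
    have := hca.tendsto.mono_left (nhdsWithin_le_nhds (s := Set.Ioi 0))
    rwa [hval] at this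
  · -- gamma01
    have key : ∀ l ∈ Set.Ioi (0:ℝ), gamma01 l (pstar l) (pstar l) =
        -2 * s * (3/4 - s/2) + (3/4 - s/2)^2 * l - pstar l * (pstar l - 2) := by
      intro l hl
      have hl0 : (l:ℝ) ≠ 0 := ne_of_gt hl
      unfold gamma01
      rw [hp l]
      rw [show l * ((2 - s + (3/4 - s/2) * l) - (2 - s + (3/4 - s/2) * l)
            - (2 - s + (3/4 - s/2) * l) * l + (2 - s + (3/4 - s/2) * l) * l + 1) = l from by ring]
      rw [div_eq_iff hl0]
      linear_combination hs2
    refine Tendsto.congr' (eventuallyEq_of_mem self_mem_nhdsWithin fun l hl => (key l hl).symm) ?_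
    have hca : ContinuousAt (fun l : ℝ =>
        -2 * s * (3/4 - s/2) + (3/4 - s/2)^2 * l - pstar l * (pstar l - 2)) 0 := by simp only [hp]; fun_prop
    have hval : -2 * s * (3/4 - s/2) + (3/4 - s/2)^2 * 0 - pstar 0 * (pstar 0 - 2) = 1 / s := by
      rw [h0, hinv]
      ring
    have := hca.tendsto.mono_left (nhdsWithin_le_nhds (s := Set.Ioi 0))
    rwa [hval] at this
end
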